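/- The resultant of the polynomials X^8 − 1 and (X+1)^8 − 1 in ℤ[X] equals −3^7 · 5^3 · 17^3; that is, W_8 = −3^7 · 5^3 · 17^3. -/

import Mathlib

open Polynomial

/-- The Sylvester matrix of two polynomials `f, g` over `ℤ`, of size
`(g.natDegree + f.natDegree) × (g.natDegree + f.natDegree)`: the first
`g.natDegree` rows carry the (shifted) coefficients of `f` and the remaining
`f.natDegree` rows carry the (shifted) coefficients of `g`. -/
noncomputable def sylvester (f g : Polynomial ℤ) :
    Matrix (Fin (g.natDegree + f.natDegree)) (Fin (g.natDegree + f.natDegree)) ℤ :=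
  Matrix.of fun i j =>
    if (i : ℕ) < g.natDegree then
      if (i : ℕ) ≤ (j : ℕ) ∧ (j : ℕ) ≤ (i : ℕ) + f.natDegree then
        f.coeff (f.natDegree + i - j)
      else 0
    else
      if (i : ℕ) - g.natDegree ≤ (j : ℕ) ∧ (j : ℕ) ≤ (i : ℕ) - g.natDegree + g.natDegree then
        g.coeff (g.natDegree + ((i : ℕ) - g.natDegree) - j)
      else 0

/-- The resultant of two polynomials over `ℤ`: the determinant of their Sylvester matrix. -/
noncomputable def resultant (f g : Polynomial ℤ) : ℤ := (_root_.sylvester f g).det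

/-- `W n` is the resultant of the polynomials `X ^ n - 1` and `(X + 1) ^ n - 1` in `ℤ[X]`. -/
noncomputable def W (n : ℕ) : ℤ := _root_.resultant (X ^ n - 1) ((X + 1) ^ n - 1)

/-!
Reversing the order of rows and columns turns the Sylvester matrix above into the transpose of
Mathlib's `Polynomial.sylvester`, so `W n` is a `Polynomial.resultant`. The resultant is
multiplicative in each argument, and if `c g ≡ r` modulo `f` with `r` a constant, then
`c ^ m Res(f, g) = a ^ n r ^ m`, where `m, n` are the degrees and `a` the leading coefficient
of `f`. In `X ^ 8 - 1 = (X - 1) (X + 1) (X ^ 2 + 1) (X ^ 4 + 1)` the first three factors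
contribute `255`, `-1` and `15 ^ 2`, as `(X + 1) ^ 8 - 1 ≡ 15` modulo `X ^ 2 + 1`. Against
`X ^ 4 + 1`, split `(X + 1) ^ 8 - 1` into `(X + 1) ^ 4 - 1 = X (X + 2) (X ^ 2 + 2 X + 2)` and
`(X + 1) ^ 4 + 1 ≡ (2 X + 1) (2 X ^ 2 + 2 X + 1)`; modulo each of these five factors a multiple
of `X ^ 4 + 1` is constant, and each half contributes `17 * 9 = 153`.
-/

theorem sylvester_eq_reindex_transpose (f g : ℤ[X]) :
    _root_.sylvester f g = (f.sylvester g f.natDegree g.natDegree).transpose.reindex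
      (Fin.revPerm.trans (finCongr (add_comm _ _)))
      (Fin.revPerm.trans (finCongr (add_comm _ _))) := by
  ext ⟨i, hi⟩ ⟨j, hj⟩
  simp only [_root_.sylvester, Polynomial.sylvester, Matrix.reindex_apply, Matrix.submatrix_apply,
    Matrix.transpose_apply, Matrix.of_apply, Equiv.symm_trans_apply, finCongr_symm, finCongr_apply,
    Fin.revPerm_symm, Fin.revPerm_apply, Fin.cast_mk, Fin.addCases, Set.mem_Icc, Fin.val_rev,
    Fin.val_castLT, Fin.val_subNat, Fin.val_cast, eq_rec_constant]
  split_ifs <;> first | rfl | omega | (congr 1; omega)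

theorem resultant_eq_polynomial_resultant (f g : ℤ[X]) :
    _root_.resultant f g = f.resultant g := by
  rw [_root_.resultant, sylvester_eq_reindex_transpose, Matrix.det_reindex_self,
    Matrix.det_transpose, Polynomial.resultant]

namespace Polynomial

variable {R : Type*} [CommRing R]

theorem ne_zero_of_eval_ne_zero {S : Type*} [Semiring S] {p : S[X]} (x : S) (h : p.eval x ≠ 0) :
    p ≠ 0 := by
  rintro rfl
  simp at h

theorem resultant_mul_left_of_ne_zero [IsDomain R] {f₁ f₂ : R[X]} (g : R[X]) (h₁ : f₁ ≠ 0)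
    (h₂ : f₂ ≠ 0) : (f₁ * f₂).resultant g = f₁.resultant g * f₂.resultant g := by
  rw [natDegree_mul h₁ h₂]
  exact resultant_mul_left _ _ _ _ le_rfl

theorem resultant_mul_right_of_ne_zero [IsDomain R] (f : R[X]) {g₁ g₂ : R[X]} (h₁ : g₁ ≠ 0)
    (h₂ : g₂ ≠ 0) : f.resultant (g₁ * g₂) = f.resultant g₁ * f.resultant g₂ := by
  rw [natDegree_mul h₁ h₂]
  exact resultant_mul_right _ _ _ _ le_rfl

theorem resultant_eq_of_C_mul_eq_C_add_mul {f g q : R[X]} {c r : R} {m n : ℕ}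
    (hf : f.natDegree ≤ m) (hq : q.natDegree + m ≤ n) (h : C c * g = C r + f * q) :
    c ^ m * f.resultant g m n = f.coeff m ^ n * r ^ m := by
  rw [← resultant_C_mul_right, h, resultant_add_mul_right _ _ _ _ _ hq hf, resultant_C_right]

theorem Monic.resultant_eq_of_eq_C_add_mul {f g q : R[X]} {r : R} {n : ℕ} (hf : f.Monic)
    (hq : q.natDegree + f.natDegree ≤ n) (h : g = C r + f * q) :
    f.resultant g f.natDegree n = r ^ f.natDegree := by
  simpa [hf.coeff_natDegree] using
    resultant_eq_of_C_mul_eq_C_add_mul (c := 1) le_rfl hq (by rw [map_one, one_mul, h])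

theorem Monic.resultant_add_mul_right_of_natDegree_le {f g q : R[X]} {n : ℕ} (hf : f.Monic)
    (hg : g.natDegree ≤ n) (hq : q.natDegree + f.natDegree ≤ n) :
    f.resultant (g + f * q) f.natDegree n = f.resultant g := by
  obtain ⟨k, rfl⟩ := Nat.exists_eq_add_of_le hg
  rw [resultant_add_mul_right _ _ _ _ _ hq le_rfl, resultant_add_right_deg _ _ _ _ _ le_rfl,
    hf.coeff_natDegree, one_pow, one_mul]

end Polynomial

theorem resultant_X_sub_one_X_add_one_pow_eight_sub_one :
    (X - 1 : ℤ[X]).resultant ((X + 1) ^ 8 - 1) = 255 := by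
  rw [show (X - 1 : ℤ[X]).natDegree = 1 by compute_degree!, ← C_1,
    resultant_X_sub_C_left _ _ _ le_rfl]
  norm_num

theorem resultant_X_add_one_X_add_one_pow_eight_sub_one :
    (X + 1 : ℤ[X]).resultant ((X + 1) ^ 8 - 1) = -1 := by
  rw [show (X + 1 : ℤ[X]).natDegree = 1 by compute_degree!, ← C_1,
    resultant_X_add_C_left _ _ _ le_rfl]
  norm_num

theorem resultant_X_sq_add_one_X_add_one_pow_eight_sub_one :
    (X ^ 2 + 1 : ℤ[X]).resultant ((X + 1) ^ 8 - 1) = 15 ^ 2 := by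
  have hf : (X ^ 2 + 1 : ℤ[X]).Monic := by monicity!
  rw [hf.resultant_eq_of_eq_C_add_mul (r := 15)
      (q := X ^ 6 + 8 * X ^ 5 + 27 * X ^ 4 + 48 * X ^ 3 + 43 * X ^ 2 + 8 * X - 15)]
  · rw [show (X ^ 2 + 1 : ℤ[X]).natDegree = 2 by compute_degree!]
  · rw [show (X ^ 2 + 1 : ℤ[X]).natDegree = 2 by compute_degree!,
      show ((X + 1) ^ 8 - 1 : ℤ[X]).natDegree = 8 by compute_degree!]
    exact Nat.add_le_of_le_sub (by norm_num) (by compute_degree!)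
  · simp only [map_ofNat]
    ring

theorem resultant_X_pow_four_add_one_X : (X ^ 4 + 1 : ℤ[X]).resultant X = 1 := by
  have h := resultant_X_pow_right (X ^ 4 + 1 : ℤ[X]) 4 1 (by compute_degree!)
  rw [pow_one] at h
  rw [show (X ^ 4 + 1 : ℤ[X]).natDegree = 4 by compute_degree!, natDegree_X, h]
  simp

theorem resultant_X_pow_four_add_one_X_add_two :
    (X ^ 4 + 1 : ℤ[X]).resultant (X + 2) = 17 := by
  rw [show (X ^ 4 + 1 : ℤ[X]).natDegree = 4 by compute_degree!,
    show (X + 2 : ℤ[X]).natDegree = 1 by compute_degree!, ← map_ofNat C 2,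
    resultant_X_add_C_right _ _ _ (by compute_degree!)]
  norm_num

theorem resultant_X_pow_four_add_one_X_sq_add_two_mul_X_add_two :
    (X ^ 4 + 1 : ℤ[X]).resultant (X ^ 2 + 2 * X + 2) = 9 := by
  have hf : (X ^ 2 + 2 * X + 2 : ℤ[X]).Monic := by monicity!
  have hdf : (X ^ 2 + 2 * X + 2 : ℤ[X]).natDegree = 2 := by compute_degree!
  have hdg : (X ^ 4 + 1 : ℤ[X]).natDegree = 4 := by compute_degree!
  rw [resultant_comm, hf.resultant_eq_of_eq_C_add_mul (r := -3) (q := X ^ 2 - 2 * X + 2)]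
  · norm_num [hdf, hdg]
  · rw [hdf, hdg]
    exact Nat.add_le_of_le_sub (by norm_num) (by compute_degree!)
  · simp only [map_neg, map_ofNat]
    ring

theorem resultant_X_pow_four_add_one_two_mul_X_add_one :
    (X ^ 4 + 1 : ℤ[X]).resultant (2 * X + 1) = 17 := by
  have hdf : (2 * X + 1 : ℤ[X]).natDegree = 1 := by compute_degree!
  have hdg : (X ^ 4 + 1 : ℤ[X]).natDegree = 4 := by compute_degree!
  have h := resultant_eq_of_C_mul_eq_C_add_mul (m := 1) (n := 4) (c := 16) (r := 17)
    (f := (2 * X + 1 : ℤ[X])) (g := X ^ 4 + 1) (q := 8 * X ^ 3 - 4 * X ^ 2 + 2 * X - 1)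
    (by compute_degree!) (Nat.add_le_of_le_sub (by norm_num) (by compute_degree!))
    (by simp only [map_ofNat]; ring)
  rw [resultant_comm, hdf, hdg]
  norm_num [coeff_X, coeff_one] at h ⊢
  linarith

theorem resultant_X_pow_four_add_one_two_mul_X_sq_add_two_mul_X_add_one :
    (X ^ 4 + 1 : ℤ[X]).resultant (2 * X ^ 2 + 2 * X + 1) = 9 := by
  have hdf : (2 * X ^ 2 + 2 * X + 1 : ℤ[X]).natDegree = 2 := by compute_degree!
  have hdg : (X ^ 4 + 1 : ℤ[X]).natDegree = 4 := by compute_degree!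
  have h := resultant_eq_of_C_mul_eq_C_add_mul (m := 2) (n := 4) (c := 4) (r := 3)
    (f := (2 * X ^ 2 + 2 * X + 1 : ℤ[X])) (g := X ^ 4 + 1) (q := 2 * X ^ 2 - 2 * X + 1)
    (by compute_degree!) (Nat.add_le_of_le_sub (by norm_num) (by compute_degree!))
    (by simp only [map_ofNat]; ring)
  rw [resultant_comm, hdf, hdg]
  norm_num [coeff_X, coeff_one] at h ⊢
  linarith

theorem resultant_X_pow_four_add_one_X_add_one_pow_four_sub_one :
    (X ^ 4 + 1 : ℤ[X]).resultant ((X + 1) ^ 4 - 1) = 153 := by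
  rw [show ((X + 1) ^ 4 - 1 : ℤ[X]) = X * (X + 2) * (X ^ 2 + 2 * X + 2) by ring,
    resultant_mul_right_of_ne_zero _ (ne_zero_of_eval_ne_zero 2 (by norm_num))
      (ne_zero_of_eval_ne_zero 2 (by norm_num)),
    resultant_mul_right_of_ne_zero _ X_ne_zero (ne_zero_of_eval_ne_zero 2 (by norm_num)),
    resultant_X_pow_four_add_one_X, resultant_X_pow_four_add_one_X_add_two,
    resultant_X_pow_four_add_one_X_sq_add_two_mul_X_add_two]
  norm_num

theorem resultant_X_pow_four_add_one_X_add_one_pow_four_add_one :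
    (X ^ 4 + 1 : ℤ[X]).resultant ((X + 1) ^ 4 + 1) = 153 := by
  have hf : (X ^ 4 + 1 : ℤ[X]).Monic := by monicity!
  have hdf : (X ^ 4 + 1 : ℤ[X]).natDegree = 4 := by compute_degree!
  have hdn :
      ((2 * X + 1) * (2 * X ^ 2 + 2 * X + 1) + (X ^ 4 + 1) * 1 : ℤ[X]).natDegree = 4 := by
    compute_degree!
  rw [show ((X + 1) ^ 4 + 1 : ℤ[X]) = (2 * X + 1) * (2 * X ^ 2 + 2 * X + 1) + (X ^ 4 + 1) * 1 by
      ring, hf.resultant_add_mul_right_of_natDegree_le ?deg_le ?deg_add_le,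
    resultant_mul_right_of_ne_zero _ (ne_zero_of_eval_ne_zero 2 (by norm_num))
      (ne_zero_of_eval_ne_zero 2 (by norm_num)),
    resultant_X_pow_four_add_one_two_mul_X_add_one,
    resultant_X_pow_four_add_one_two_mul_X_sq_add_two_mul_X_add_one]
  case deg_le => rw [hdn]; compute_degree!
  case deg_add_le => rw [hdn, hdf, natDegree_one]
  norm_num

theorem resultant_X_pow_four_add_one_X_add_one_pow_eight_sub_one :
    (X ^ 4 + 1 : ℤ[X]).resultant ((X + 1) ^ 8 - 1) = 153 ^ 2 := by
  rw [show ((X + 1) ^ 8 - 1 : ℤ[X]) = ((X + 1) ^ 4 - 1) * ((X + 1) ^ 4 + 1) by ring,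
    resultant_mul_right_of_ne_zero _ (ne_zero_of_eval_ne_zero 2 (by norm_num))
      (ne_zero_of_eval_ne_zero 2 (by norm_num)),
    resultant_X_pow_four_add_one_X_add_one_pow_four_sub_one,
    resultant_X_pow_four_add_one_X_add_one_pow_four_add_one, sq]

/-- The resultant of `X ^ 8 - 1` and `(X + 1) ^ 8 - 1` in `ℤ[X]`. -/
theorem W_eq_8 : W 8 = (-3 ^ 7 * 5 ^ 3 * 17 ^ 3 : ℤ) := by
  rw [W, resultant_eq_polynomial_resultant,
    show (X ^ 8 - 1 : ℤ[X]) = (X - 1) * (X + 1) * (X ^ 2 + 1) * (X ^ 4 + 1) by ring,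
    resultant_mul_left_of_ne_zero _ (ne_zero_of_eval_ne_zero 2 (by norm_num))
      (ne_zero_of_eval_ne_zero 2 (by norm_num)),
    resultant_mul_left_of_ne_zero _ (ne_zero_of_eval_ne_zero 2 (by norm_num))
      (ne_zero_of_eval_ne_zero 2 (by norm_num)),
    resultant_mul_left_of_ne_zero _ (ne_zero_of_eval_ne_zero 2 (by norm_num))
      (ne_zero_of_eval_ne_zero 2 (by norm_num)),
    resultant_X_sub_one_X_add_one_pow_eight_sub_one,
    resultant_X_add_one_X_add_one_pow_eight_sub_one,
    resultant_X_sq_add_one_X_add_one_pow_eight_sub_one,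
    resultant_X_pow_four_add_one_X_add_one_pow_eight_sub_one]
  norm_num
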